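/- Let ℓ be a prime and 0 ≤ n ≤ ℓ-2. The space of SL₂(F_ℓ)-invariants of I_n (under (f·M)(a,b) = f((a,b)Mᵗ)) is one-dimensional if n = 0 and zero otherwise. -/

import Mathlib

/-!
`SL₂(F_ℓ)` acts transitively on `F_ℓ² \ {0}`, so an invariant `f ∈ I_n` is the multiple
`f(1, 0) · 𝟙_{v ≠ 0}` of the indicator of the nonzero vectors. If some `x ∈ F_ℓ^×` has
`x ^ n ≠ 1`, homogeneity gives `f(1, 0) = x ^ n f(1, 0)`, so `f = 0`; otherwise the indicator
itself lies in `I_n`. Since `F_ℓ^×` is cyclic of order `ℓ - 1`, the invariants therefore have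
dimension `1` if `ℓ - 1 ∣ n` and `0` otherwise, and for `n ≤ ℓ - 2` the first case is `n = 0`.
-/

open MvPolynomial

/-- The space `I_n` of functions `f : F_ℓ² → F_ℓ` vanishing at the origin and homogeneous of
degree `n`: `f (x • v) = x ^ n * f v` for all nonzero scalars `x`. -/
def homogeneousFns (ℓ n : ℕ) : Submodule (ZMod ℓ) ((Fin 2 → ZMod ℓ) → ZMod ℓ) where
  carrier := {f | f 0 = 0 ∧ ∀ x : ZMod ℓ, x ≠ 0 → ∀ v, f (x • v) = x ^ n * f v}
  add_mem' := by
    rintro f g ⟨hf0, hf⟩ ⟨hg0, hg⟩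
    refine ⟨by simp [hf0, hg0], fun x hx v => ?_⟩
    simp only [Pi.add_apply, hf x hx v, hg x hx v]
    ring
  zero_mem' := ⟨rfl, by simp⟩
  smul_mem' := by
    rintro c f ⟨hf0, hf⟩
    refine ⟨by simp [hf0], fun x hx v => ?_⟩
    simp only [Pi.smul_apply, hf x hx v, smul_eq_mul]
    ring

/-- The subspace of `SL₂(F_ℓ)`-invariant functions in `I_n`, for the action
`(f·M)(v) = f(M.mulVec v)`. -/
def homogeneousFnsInvariants (ℓ n : ℕ) :
    Submodule (ZMod ℓ) ((Fin 2 → ZMod ℓ) → ZMod ℓ) where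
  carrier := {f | f ∈ homogeneousFns ℓ n ∧
    ∀ M : Matrix (Fin 2) (Fin 2) (ZMod ℓ), M.det = 1 → ∀ v, f (M.mulVec v) = f v}
  add_mem' := by
    rintro f g ⟨hf, hf'⟩ ⟨hg, hg'⟩
    exact ⟨add_mem hf hg, fun M hM v => by simp only [Pi.add_apply, hf' M hM v, hg' M hM v]⟩
  zero_mem' := ⟨zero_mem _, fun M hM v => rfl⟩
  smul_mem' := by
    rintro c f ⟨hf, hf'⟩
    exact ⟨Submodule.smul_mem _ c hf, fun M hM v => by simp only [Pi.smul_apply, hf' M hM v]⟩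


open Matrix

theorem Matrix.exists_det_eq_one_mulVec_eq {K : Type*} [Field K] {v : Fin 2 → K} (hv : v ≠ 0) :
    ∃ M : Matrix (Fin 2) (Fin 2) K, M.det = 1 ∧ M *ᵥ ![1, 0] = v := by
  by_cases h0 : v 0 = 0
  · have h1 : v 1 ≠ 0 := fun h1 => hv <| funext fun i => by fin_cases i <;> simp [h0, h1]
    refine ⟨!![0, -(v 1)⁻¹; v 1, 0], by simp [det_fin_two_of, h1], ?_⟩
    funext i; fin_cases i <;> simp [h0]
  · refine ⟨!![v 0, 0; v 1, (v 0)⁻¹], by simp [det_fin_two_of, h0], ?_⟩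
    funext i; fin_cases i <;> simp

theorem apply_eq_apply_of_forall_det_eq_one {K V : Type*} [Field K]
    {f : (Fin 2 → K) → V} (hf : ∀ M : Matrix (Fin 2) (Fin 2) K, M.det = 1 → ∀ v, f (M *ᵥ v) = f v)
    {v : Fin 2 → K} (hv : v ≠ 0) : f v = f ![1, 0] := by
  obtain ⟨M, hM, rfl⟩ := exists_det_eq_one_mulVec_eq hv
  exact hf M hM _

namespace homogeneousFnsInvariants

variable {ℓ : ℕ} [Fact ℓ.Prime] {n : ℕ}

def nonzeroIndicator (ℓ : ℕ) : (Fin 2 → ZMod ℓ) → ZMod ℓ := fun v => if v = 0 then 0 else 1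

theorem nonzeroIndicator_ne_zero : nonzeroIndicator ℓ ≠ 0 := fun h => by
  simpa [nonzeroIndicator] using congrFun h ![1, 0]

theorem eq_smul_nonzeroIndicator {f : (Fin 2 → ZMod ℓ) → ZMod ℓ}
    (hf : f ∈ homogeneousFnsInvariants ℓ n) : f = f ![1, 0] • nonzeroIndicator ℓ := by
  funext v
  by_cases hv : v = 0
  · simp [nonzeroIndicator, hv, hf.1.1]
  · simp [nonzeroIndicator, hv, apply_eq_apply_of_forall_det_eq_one hf.2 hv]

theorem le_span_nonzeroIndicator :
    homogeneousFnsInvariants ℓ n ≤ Submodule.span (ZMod ℓ) {nonzeroIndicator ℓ} := fun _ hf =>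
  Submodule.mem_span_singleton.mpr ⟨_, (eq_smul_nonzeroIndicator hf).symm⟩

theorem nonzeroIndicator_mem_of_dvd (hn : ℓ - 1 ∣ n) :
    nonzeroIndicator ℓ ∈ homogeneousFnsInvariants ℓ n := by
  refine ⟨⟨by simp [nonzeroIndicator], fun x hx v => ?_⟩, fun M hM v => ?_⟩
  · have hxn : x ^ n = 1 := by
      simpa using congrArg Units.val
        ((FiniteField.forall_pow_eq_one_iff (ZMod ℓ) n).mpr (by rwa [ZMod.card]) (Units.mk0 x hx))
    simp [nonzeroIndicator, hxn, hx]
  · have hM' : M.det ≠ 0 := by simp [hM]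
    simp only [nonzeroIndicator, (mulVec_injective_of_det_ne_zero hM').eq_iff' (mulVec_zero M)]

theorem eq_bot_of_not_dvd (hn : ¬ ℓ - 1 ∣ n) : homogeneousFnsInvariants ℓ n = ⊥ := by
  refine eq_bot_iff.mpr fun f hf => ?_
  obtain ⟨x, hx⟩ : ∃ x : (ZMod ℓ)ˣ, x ^ n ≠ 1 := by
    by_contra! h
    exact hn (by rwa [← ZMod.card ℓ, ← FiniteField.forall_pow_eq_one_iff])
  have hxe : (x : ZMod ℓ) • (![1, 0] : Fin 2 → ZMod ℓ) ≠ 0 := by simp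
  have hfe : f ![1, 0] = 0 := by
    have h := hf.1.2 x x.ne_zero ![1, 0]
    rw [apply_eq_apply_of_forall_det_eq_one hf.2 hxe] at h
    have hxn : (x : ZMod ℓ) ^ n ≠ 1 := fun h' => hx (Units.ext (by simpa using h'))
    have : ((x : ZMod ℓ) ^ n - 1) * f ![1, 0] = 0 := by linear_combination -h
    exact (mul_eq_zero.mp this).resolve_left (sub_ne_zero.mpr hxn)
  rw [Submodule.mem_bot, eq_smul_nonzeroIndicator hf, hfe, zero_smul]

theorem finrank_eq : Module.finrank (ZMod ℓ) (homogeneousFnsInvariants ℓ n) =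
    if ℓ - 1 ∣ n then 1 else 0 := by
  split_ifs with hn
  · have : homogeneousFnsInvariants ℓ n = Submodule.span (ZMod ℓ) {nonzeroIndicator ℓ} :=
      le_antisymm le_span_nonzeroIndicator
        ((Submodule.span_singleton_le_iff_mem _ _).mpr (nonzeroIndicator_mem_of_dvd hn))
    rw [this, finrank_span_singleton nonzeroIndicator_ne_zero]
  · rw [eq_bot_of_not_dvd hn, finrank_bot]

end homogeneousFnsInvariants

/-- For a prime `ℓ` and `0 ≤ n ≤ ℓ - 2`, the space of `SL₂(F_ℓ)`-invariants
of `I_n` is one-dimensional if `n = 0` and zero otherwise. -/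
theorem homogeneousFnsInvariants_finrank (ℓ : ℕ) [Fact (Nat.Prime ℓ)] (n : ℕ)
    (hn : n ≤ ℓ - 2) :
    Module.finrank (ZMod ℓ) ↥(homogeneousFnsInvariants ℓ n) = if n = 0 then 1 else 0 := by
  have hℓ : 2 ≤ ℓ := (Fact.out : ℓ.Prime).two_le
  have hdvd : ℓ - 1 ∣ n ↔ n = 0 :=
    ⟨fun h => Nat.eq_zero_of_dvd_of_lt h (by omega), fun h => h ▸ dvd_zero _⟩
  rw [homogeneousFnsInvariants.finrank_eq]
  simp only [hdvd]
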